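/- arXiv:1401.6145 — 4 statements merged into one kernel-verified Lean document; each statement's English description precedes it below -/
import Mathlib

section
/- Let P be a random variable on [0, P_u] with density f_P(x) = (2πλ/(η ρ₀^{2/η})) x^{2/η − 1} exp(−πλ (x/ρ₀)^{2/η}) / (1 − exp(−πλ (P_u/ρ₀)^{2/η})). Then for any α > 0, E[P^α] = ρ₀^α · γ(αη/2 + 1, πλ (P_u/ρ₀)^{2/η}) / ((πλ)^{αη/2} (1 − exp(−πλ (P_u/ρ₀)^{2/η}))), where γ(a,b) = ∫₀^b t^{a−1} e^{−t} dt is the lower incomplete gamma function. -/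
open Real MeasureTheory Set Filter Topology

/-- The lower incomplete gamma function `γ(a,b) = ∫₀^b t^(a-1) e^(-t) dt`. -/
noncomputable def lowerIncGamma (a b : ℝ) : ℝ := ∫ t in (0:ℝ)..b, t ^ (a - 1) * exp (-t)

/-!
With `p = 2/η` and `c = πλ / ρ₀^p`, the density `f_P` is the Weibull density
`c p x^(p-1) e^(-c x^p)` restricted to `[0, P_u]` and divided by its mass `D` there.
Substituting `t = c x^p` turns the Weibull density into `e^(-t) dt` and `x^α` into
`c^(-αη/2) t^(αη/2)`, so the `α`-th moment is `c^(-αη/2) γ(αη/2 + 1, c P_u^p) / D`.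
-/

/-- `x ↦ x ^ p` need not be differentiable at `0`, so the substitution is done on `Ioc 0 a` with
the measure-theoretic change of variables formula. -/
theorem intervalIntegral.integral_comp_rpow_of_nonneg {E : Type*} [NormedAddCommGroup E]
    [NormedSpace ℝ E] (g : ℝ → E) {p a : ℝ} (hp : 0 < p) (ha : 0 ≤ a) :
    ∫ x in 0..a, (p * x ^ (p - 1)) • g (x ^ p) = ∫ y in 0..a ^ p, g y := by
  have hmono : StrictMonoOn (· ^ p) (Icc 0 a) :=
    (strictMonoOn_rpow_Ici_of_exponent_pos hp).mono Icc_subset_Ici_self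
  have himage : (· ^ p) '' Ioc 0 a = Ioc 0 (a ^ p) := by
    rw [(continuous_rpow_const hp.le).continuousOn.image_Ioc_of_strictMonoOn ha hmono,
      zero_rpow hp.ne']
  rw [intervalIntegral.integral_of_le ha, intervalIntegral.integral_of_le (rpow_nonneg ha p),
    ← himage, integral_image_eq_integral_abs_deriv_smul measurableSet_Ioc
      (fun x hx => (hasDerivAt_rpow_const (Or.inl hx.1.ne')).hasDerivWithinAt)
      (hmono.injOn.mono Ioc_subset_Icc_self)]
  refine setIntegral_congr_fun measurableSet_Ioc fun x hx => ?_
  rw [abs_of_pos (by have := hx.1; positivity)]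

noncomputable def weibullDensity (c p x : ℝ) : ℝ := c * p * x ^ (p - 1) * exp (-(c * x ^ p))

theorem integral_rpow_mul_weibullDensity {c p a : ℝ} (hc : 0 < c) (hp : 0 < p) (ha : 0 ≤ a)
    (s : ℝ) :
    ∫ x in 0..a, x ^ (p * s) * weibullDensity c p x
      = c ^ (-s) * lowerIncGamma (s + 1) (c * a ^ p) := by
  have hintegrand : ∀ x ∈ uIcc 0 a, x ^ (p * s) * weibullDensity c p x
      = c ^ (-s) * (p * x ^ (p - 1)) • (c * ((c * x ^ p) ^ s * exp (-(c * x ^ p)))) := by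
    intro x hx
    have hx0 : 0 ≤ x := by rw [uIcc_of_le ha] at hx; exact hx.1
    rw [weibullDensity, smul_eq_mul, mul_rpow hc.le (rpow_nonneg hx0 p), ← rpow_mul hx0,
      rpow_neg hc.le]
    field_simp
  rw [intervalIntegral.integral_congr hintegrand, intervalIntegral.integral_const_mul,
    intervalIntegral.integral_comp_rpow_of_nonneg (fun y => c * ((c * y) ^ s * exp (-(c * y))))
      hp ha, intervalIntegral.integral_const_mul,
    intervalIntegral.mul_integral_comp_mul_left (f := fun t => t ^ s * exp (-t)), mul_zero,
    lowerIncGamma, add_sub_cancel_right]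

theorem transmit_power_moments_general (lam η ρ₀ Pu α : ℝ)
    (hlam : 0 < lam) (hη : 0 < η) (hρ : 0 < ρ₀) (hPu : 0 < Pu) :
    (∫ x in (0:ℝ)..Pu,
        x ^ α *
          ((2 * π * lam * x ^ (2/η - 1) * exp (-(π * lam) * (x/ρ₀) ^ (2/η))) /
            (η * ρ₀ ^ (2/η) * (1 - exp (-(π * lam) * (Pu/ρ₀) ^ (2/η))))))
      = ρ₀ ^ α * lowerIncGamma (α * η / 2 + 1) (π * lam * (Pu/ρ₀) ^ (2/η)) /
          ((π * lam) ^ (α * η / 2) * (1 - exp (-(π * lam) * (Pu/ρ₀) ^ (2/η)))) := by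
  set p := 2 / η with hp_def
  set s := α * η / 2 with hs_def
  set D := 1 - exp (-(π * lam) * (Pu / ρ₀) ^ p)
  set c := π * lam / ρ₀ ^ p with hc_def
  have hπlam : 0 < π * lam := mul_pos pi_pos hlam
  have hps : p * s = α := by rw [hp_def, hs_def]; field_simp
  have hηp : η * p = 2 := by rw [hp_def]; field_simp
  have hdensity : ∀ x ∈ uIcc 0 Pu,
      x ^ α *
          (2 * π * lam * x ^ (p - 1) * exp (-(π * lam) * (x / ρ₀) ^ p) / (η * ρ₀ ^ p * D))
        = x ^ (p * s) * weibullDensity c p x / D := by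
    intro x hx
    have hx0 : 0 ≤ x := by rw [uIcc_of_le hPu.le] at hx; exact hx.1
    rw [hps, weibullDensity, div_rpow hx0 hρ.le, hc_def, div_mul_eq_mul_div, ← hηp]
    field_simp
  have hc_rpow : c ^ (-s) = ρ₀ ^ α / (π * lam) ^ s := by
    rw [rpow_neg (by positivity), div_rpow hπlam.le (by positivity), ← rpow_mul hρ.le, hps,
      inv_div]
  have hcPu : c * Pu ^ p = π * lam * (Pu / ρ₀) ^ p := by
    rw [div_rpow hPu.le hρ.le]; ring
  rw [intervalIntegral.integral_congr hdensity, intervalIntegral.integral_div,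
    integral_rpow_mul_weibullDensity (by positivity) (by positivity) hPu.le, hc_rpow, hcPu,
    div_mul_eq_mul_div, div_div]

/-- Moments of the truncated channel-inversion transmit power. -/
theorem transmit_power_moments (lam η ρ₀ Pu α : ℝ)
    (hlam : 0 < lam) (hη : 0 < η) (hρ : 0 < ρ₀) (hPu : 0 < Pu) (hα : 0 < α) :
    (∫ x in (0:ℝ)..Pu,
        x ^ α *
          ((2 * π * lam * x ^ (2/η - 1) * exp (-(π * lam) * (x/ρ₀) ^ (2/η))) /
            (η * ρ₀ ^ (2/η) * (1 - exp (-(π * lam) * (Pu/ρ₀) ^ (2/η))))))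
      = ρ₀ ^ α * lowerIncGamma (α * η / 2 + 1) (π * lam * (Pu/ρ₀) ^ (2/η)) /
          ((π * lam) ^ (α * η / 2) * (1 - exp (-(π * lam) * (Pu/ρ₀) ^ (2/η)))) :=
  transmit_power_moments_general lam η ρ₀ Pu α hlam hη hρ hPu
end

section
/- For η > 2 and any θ > 0, the integral ∫_{θ^{−1/η}}^{∞} y/(y^η + 1) dy is finite, and moreover θ^{2/η} · ∫_{θ^{−1/η}}^{∞} y/(y^η + 1) dy is strictly increasing in θ. -/
open Real MeasureTheory Set

lemma aux_integrable_interf (η : ℝ) (hη : 2 < η) {a : ℝ} (ha : 0 < a) :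
    IntegrableOn (fun y : ℝ => y / (y ^ η + 1)) (Ioi a) := by
  have hmaj : IntegrableOn (fun y : ℝ => y ^ (1 - η)) (Ioi a) :=
    integrableOn_Ioi_rpow_of_lt (by linarith) ha
  refine hmaj.mono' ?_ ?_
  · refine ContinuousOn.aestronglyMeasurable ?_ measurableSet_Ioi
    refine ContinuousOn.div continuousOn_id ?_ ?_
    · intro x hx
      exact ((Real.continuousAt_rpow_const x η
        (Or.inl (ne_of_gt (lt_trans ha hx)))).continuousWithinAt.add
        continuousWithinAt_const)
    · intro x hx
      have hx0 : 0 < x := lt_trans ha hx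
      have : 0 < x ^ η := rpow_pos_of_pos hx0 η
      positivity
  · filter_upwards [ae_restrict_mem measurableSet_Ioi] with y hy
    have hy0 : 0 < y := lt_trans ha hy
    have h1 : 0 < y ^ η := rpow_pos_of_pos hy0 η
    rw [Real.norm_eq_abs, abs_of_nonneg (by positivity)]
    rw [rpow_sub hy0, rpow_one]
    gcongr
    linarith

/-- For `η > 2` and `θ > 0`, the interference integral `∫_{θ^(-1/η)}^∞ y/(y^η+1) dy`
is finite, and `θ ↦ θ^(2/η) ∫_{θ^(-1/η)}^∞ y/(y^η+1) dy` is strictly increasing on `(0,∞)`. -/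
theorem interference_integral_finite_and_monotone (η : ℝ) (hη : 2 < η) :
    (∀ θ : ℝ, 0 < θ →
        IntegrableOn (fun y : ℝ => y / (y ^ η + 1)) (Ioi (θ ^ (-(1:ℝ)/η)))) ∧
    StrictMonoOn (fun θ : ℝ =>
        θ ^ (2/η) * ∫ y in Ioi (θ ^ (-(1:ℝ)/η)), y / (y ^ η + 1)) (Ioi 0) := by
  have hη0 : (0:ℝ) < η := by linarith
  have hInt : ∀ θ : ℝ, 0 < θ →
      IntegrableOn (fun y : ℝ => y / (y ^ η + 1)) (Ioi (θ ^ (-(1:ℝ)/η))) := by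
    intro θ hθ
    exact aux_integrable_interf η hη (rpow_pos_of_pos hθ _)
  refine ⟨hInt, ?_⟩
  intro θ₁ h1 θ₂ h2 h12
  simp only [mem_Ioi] at h1 h2
  set a₁ := θ₁ ^ (-(1:ℝ)/η) with ha₁
  set a₂ := θ₂ ^ (-(1:ℝ)/η) with ha₂
  have ha₁0 : 0 < a₁ := rpow_pos_of_pos h1 _
  have ha₂0 : 0 < a₂ := rpow_pos_of_pos h2 _
  have hneg : (-(1:ℝ)/η) < 0 := by
    apply div_neg_of_neg_of_pos <;> linarith
  have ha21 : a₂ < a₁ := rpow_lt_rpow_of_neg h1 h12 hneg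
  have hI1 := hInt θ₁ h1
  have hI2 := hInt θ₂ h2
  have hnonneg : ∀ᵐ y ∂(volume.restrict (Ioi a₂)),
      0 ≤ y / (y ^ η + 1) := by
    filter_upwards [ae_restrict_mem measurableSet_Ioi] with y hy
    have hy0 : 0 < y := lt_trans ha₂0 hy
    have : 0 < y ^ η := rpow_pos_of_pos hy0 η
    positivity
  have hle : (∫ y in Ioi a₁, y / (y ^ η + 1)) ≤ ∫ y in Ioi a₂, y / (y ^ η + 1) := by
    refine setIntegral_mono_set hI2 hnonneg ?_
    exact HasSubset.Subset.eventuallyLE (Ioi_subset_Ioi ha21.le)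
  have hpos : 0 < ∫ y in Ioi a₁, y / (y ^ η + 1) := by
    have hnn : ∀ᵐ y ∂(volume.restrict (Ioi a₁)), 0 ≤ y / (y ^ η + 1) := by
      filter_upwards [ae_restrict_mem measurableSet_Ioi] with y hy
      have hy0 : 0 < y := lt_trans ha₁0 hy
      have : 0 < y ^ η := rpow_pos_of_pos hy0 η
      positivity
    rw [setIntegral_pos_iff_support_of_nonneg_ae hnn hI1]
    have hsub : Ioi a₁ ⊆ Function.support (fun y : ℝ => y / (y ^ η + 1)) ∩ Ioi a₁ := by
      intro y hy
      have hy0 : 0 < y := lt_trans ha₁0 hy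
      have hp : 0 < y ^ η := rpow_pos_of_pos hy0 η
      refine ⟨?_, hy⟩
      simp only [Function.mem_support]
      positivity
    calc (0:ENNReal) < volume (Ioi a₁) := by simp [Real.volume_Ioi]
      _ ≤ _ := measure_mono hsub
  have hθpow : θ₁ ^ (2/η) < θ₂ ^ (2/η) :=
    rpow_lt_rpow h1.le h12 (by positivity)
  simp only
  exact mul_lt_mul hθpow hle hpos (by positivity)
end

section
/- With the Laplace transform L_I(s) = exp(−2πλ s^{2/η} E[P^{2/η}] ∫_{(sρ₀)^{−1/η}}^{∞} y/(y^η+1) dy) and under infinite maximum transmit power (so E[P^{2/η}] = ρ₀^{2/η}·Γ(2)/(πλ) = ρ₀^{2/η}/(πλ)), the SINR outage O_s = 1 − exp(−θσ²/ρ₀)·L_I(θ/ρ₀) equals 1 − exp(−θσ²/ρ₀ − 2θ^{2/η} ∫_{θ^{−1/η}}^{∞} y/(y^η+1) dy), which is independent of the base station intensity λ. -/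
open Real MeasureTheory Set

/-- With infinite maximum transmit power, `E[P^(2/η)] = ρ₀^(2/η)/(πλ)` and the SINR outage
`1 - exp(-θσ²/ρ₀)·L_I(θ/ρ₀)` equals `1 - exp(-θσ²/ρ₀ - 2θ^(2/η)∫_{θ^(-1/η)}^∞ y/(y^η+1) dy)`,
which contains no `λ` (independence of the base station intensity). -/
theorem sinr_outage_infinite_power (lam η ρ₀ σ2 θ : ℝ)
    (hlam : 0 < lam) (hη : 2 < η) (hρ : 0 < ρ₀) (hσ : 0 ≤ σ2) (hθ : 0 < θ) :
    1 - exp (-(θ * σ2 / ρ₀)) *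
        exp (-(2 * π * lam * (θ / ρ₀) ^ (2/η) * (ρ₀ ^ (2/η) / (π * lam)) *
          ∫ y in Ioi (((θ / ρ₀) * ρ₀) ^ (-(1:ℝ)/η)), y / (y ^ η + 1)))
      = 1 - exp (-(θ * σ2 / ρ₀) -
          2 * θ ^ (2/η) * ∫ y in Ioi (θ ^ (-(1:ℝ)/η)), y / (y ^ η + 1)) := by
  have hθρ : θ / ρ₀ * ρ₀ = θ := div_mul_cancel₀ θ hρ.ne'
  have hpow : (θ / ρ₀) ^ (2/η) * ρ₀ ^ (2/η) = θ ^ (2/η) := by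
    rw [← mul_rpow (by positivity) hρ.le, hθρ]
  have hcoef : 2 * π * lam * (θ / ρ₀) ^ (2/η) * (ρ₀ ^ (2/η) / (π * lam))
      = 2 * θ ^ (2/η) := by
    have hπ : π ≠ 0 := pi_ne_zero
    field_simp
    linear_combination hpow
  rw [← exp_add, hθρ, hcoef, ← sub_eq_add_neg]
end

section
/- In the interference-limited case (σ² = 0) with η = 4 and infinite P_u, the uplink SINR outage probability equals O_s(θ) = 1 − exp(−√θ · arctan(√θ)) for all θ > 0; i.e., starting from O_s = 1 − exp(−2√θ ∫_{θ^{−1/4}}^{∞} y/(y⁴+1) dy), the integral evaluates to (1/2)arctan(√θ). -/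
open Real MeasureTheory Set Filter

/-! The substitution `u = y²` turns `y / (y⁴ + 1)` into `(1/2) / (u² + 1)`, so `arctan (y²) / 2` is
an antiderivative and the tail integral from `a` is `π/4 - arctan (a²) / 2`. At `a = θ^(-1/4)` we
have `a² = 1/√θ`, and `arctan (1/√θ) = π/2 - arctan √θ` turns `2√θ` times the integral into
`√θ arctan √θ`. -/

theorem hasDerivAt_arctan_sq_div_two (x : ℝ) :
    HasDerivAt (fun y : ℝ => arctan (y ^ 2) / 2) (x / (x ^ 4 + 1)) x := by
  refine (((hasDerivAt_pow 2 x).arctan).div_const 2).congr_deriv ?_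
  field_simp
  ring

theorem integral_Ioi_div_pow_four_add_one {a : ℝ} (ha : 0 ≤ a) :
    ∫ y in Ioi a, y / (y ^ 4 + 1) = π / 4 - arctan (a ^ 2) / 2 := by
  have h_nonneg : ∀ x ∈ Ioi a, 0 ≤ x / (x ^ 4 + 1) := fun x hx =>
    div_nonneg (ha.trans hx.le) (by positivity)
  have h_lim : Tendsto (fun y : ℝ => arctan (y ^ 2) / 2) atTop (nhds (π / 2 / 2)) :=
    ((tendsto_arctan_atTop.mono_right nhdsWithin_le_nhds).comp
      (tendsto_pow_atTop two_ne_zero)).div_const 2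
  rw [integral_Ioi_of_hasDerivAt_of_nonneg'
    (fun x _ => hasDerivAt_arctan_sq_div_two x) h_nonneg h_lim]
  ring

theorem rpow_neg_one_div_four_sq {θ : ℝ} (hθ : 0 ≤ θ) :
    (θ ^ (-(1:ℝ) / 4)) ^ 2 = (√θ)⁻¹ := by
  rw [← rpow_natCast, ← rpow_mul hθ, sqrt_eq_rpow, ← rpow_neg hθ]
  norm_num

/-- Interference-limited case, `η = 4`, infinite `P_u`: the uplink SINR outage
`1 - exp(-2√θ ∫_{θ^(-1/4)}^∞ y/(y⁴+1) dy)` equals `1 - exp(-√θ arctan √θ)`. -/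
theorem sinr_outage_closed_form_eta_four (θ : ℝ) (hθ : 0 < θ) :
    1 - exp (-(2 * Real.sqrt θ * ∫ y in Ioi (θ ^ (-(1:ℝ)/4)), y / (y ^ 4 + 1)))
      = 1 - exp (-(Real.sqrt θ * arctan (Real.sqrt θ))) := by
  rw [integral_Ioi_div_pow_four_add_one (rpow_nonneg hθ.le _), rpow_neg_one_div_four_sq hθ.le,
    arctan_inv_of_pos (sqrt_pos.mpr hθ)]
  ring_nf
end
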